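/- arXiv:2307.10777 — 2 statements merged into one kernel-verified Lean document; each statement's English description precedes it below -/
import Mathlib

section
/- A real sequence (x_n) is I-convergent to L if and only if I-limsup x = I-liminf x = L. -/
open MeasureTheory Set
open scoped ENNReal

/-- A nontrivial admissible ideal of subsets of ℕ. -/
structure NAIdeal where
  carrier : Set (Set ℕ)
  downward : ∀ A ∈ carrier, ∀ B, B ⊆ A → B ∈ carrier
  unionMem : ∀ A ∈ carrier, ∀ B ∈ carrier, A ∪ B ∈ carrier
  admissible : ∀ n : ℕ, {n} ∈ carrier
  nontriv : (Set.univ : Set ℕ) ∉ carrier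

/-- I-limit superior of a real sequence, in the extended reals
(sSup of the empty set is ⊥, matching the convention −∞). -/
noncomputable def Ilimsup (I : NAIdeal) (x : ℕ → ℝ) : EReal :=
  sSup ((fun b : ℝ => (b : EReal)) '' {b : ℝ | {k | x k > b} ∉ I.carrier})

/-- I-limit inferior of a real sequence, in the extended reals
(sInf of the empty set is ⊤, matching the convention +∞). -/
noncomputable def Iliminf (I : NAIdeal) (x : ℕ → ℝ) : EReal :=
  sInf ((fun a : ℝ => (a : EReal)) '' {a : ℝ | {k | x k < a} ∉ I.carrier})

/-- I-boundedness of a real sequence. -/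
def IBounded (I : NAIdeal) (x : ℕ → ℝ) : Prop :=
  ∃ M > (0 : ℝ), {k | |x k| > M} ∈ I.carrier

/-- `J` is a sequence of closed intervals about the point `p`. -/
def AboutP (p : ℝ) (J : ℕ → Set ℝ) : Prop :=
  ∀ n, p ∈ J n ∧ ∃ a b : ℝ, J n = Set.Icc a b

/-- The admissibility condition 𝒮(J) = {n : 0 < λ(Jₙ) < 1/n} ∈ F(I),
i.e. its complement lies in the ideal. -/
def AdmSeq (I : NAIdeal) (J : ℕ → Set ℝ) : Prop :=
  {n : ℕ | 0 < volume (J n) ∧ volume (J n) < 1 / (n : ℝ≥0∞)}ᶜ ∈ I.carrier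

/-- The sequence of ratios λ(Jₙ ∩ E)/λ(Jₙ). -/
noncomputable def ratioSeq (E : Set ℝ) (J : ℕ → Set ℝ) (n : ℕ) : ℝ :=
  (volume (J n ∩ E)).toReal / (volume (J n)).toReal

/-- Lower I-density of `E` at `p`. -/
noncomputable def lowerIDensity (I : NAIdeal) (p : ℝ) (E : Set ℝ) : EReal :=
  sInf {v : EReal | ∃ J : ℕ → Set ℝ, AboutP p J ∧ AdmSeq I J ∧ v = Iliminf I (ratioSeq E J)}

/-- Upper I-density of `E` at `p`. -/
noncomputable def upperIDensity (I : NAIdeal) (p : ℝ) (E : Set ℝ) : EReal :=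
  sSup {v : EReal | ∃ J : ℕ → Set ℝ, AboutP p J ∧ AdmSeq I J ∧ v = Ilimsup I (ratioSeq E J)}

/-- Θ_I(E): the set of points where `E` has lower I-density 1. -/
def Theta (I : NAIdeal) (E : Set ℝ) : Set ℝ :=
  {x : ℝ | lowerIDensity I x E = 1}

/-- I-convergence to L iff I-limsup = I-liminf = L. -/
theorem stmt6 (I : NAIdeal) (x : ℕ → ℝ) (L : ℝ) :
    (∀ ε > (0 : ℝ), {k | ε ≤ |x k - L|} ∈ I.carrier) ↔
      (Ilimsup I x = (L : EReal) ∧ Iliminf I x = (L : EReal)) := by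
  constructor
  · intro h
    have hA : ∀ b : ℝ, L < b → {k | x k > b} ∈ I.carrier := by
      intro b hb
      refine I.downward _ (h (b - L) (by linarith)) _ ?_
      intro k hk
      simp only [Set.mem_setOf_eq] at hk ⊢
      rw [le_abs]; left; linarith
    have hB : ∀ b : ℝ, b < L → {k | x k > b} ∉ I.carrier := by
      intro b hb hmem
      have h1 : {k : ℕ | x k ≤ b} ∈ I.carrier := by
        refine I.downward _ (h (L - b) (by linarith)) _ ?_
        intro k hk
        simp only [Set.mem_setOf_eq] at hk ⊢
        rw [le_abs]; right; linarith
      have huniv : (Set.univ : Set ℕ) ⊆ {k | x k > b} ∪ {k : ℕ | x k ≤ b} := by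
        intro k _
        by_cases hk : x k ≤ b
        · exact Or.inr hk
        · exact Or.inl (lt_of_not_ge hk)
      exact I.nontriv (I.downward _ (I.unionMem _ hmem _ h1) _ huniv)
    have hC : ∀ a : ℝ, a < L → {k | x k < a} ∈ I.carrier := by
      intro a ha
      refine I.downward _ (h (L - a) (by linarith)) _ ?_
      intro k hk
      simp only [Set.mem_setOf_eq] at hk ⊢
      rw [le_abs]; right; linarith
    have hD : ∀ a : ℝ, L < a → {k | x k < a} ∉ I.carrier := by
      intro a ha hmem
      have h1 : {k : ℕ | a ≤ x k} ∈ I.carrier := by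
        refine I.downward _ (h (a - L) (by linarith)) _ ?_
        intro k hk
        simp only [Set.mem_setOf_eq] at hk ⊢
        rw [le_abs]; left; linarith
      have huniv : (Set.univ : Set ℕ) ⊆ {k | x k < a} ∪ {k : ℕ | a ≤ x k} := by
        intro k _
        by_cases hk : x k < a
        · exact Or.inl hk
        · exact Or.inr (le_of_not_gt hk)
      exact I.nontriv (I.downward _ (I.unionMem _ hmem _ h1) _ huniv)
    constructor
    · apply le_antisymm
      · apply sSup_le
        rintro y ⟨b, hb, rfl⟩
        simp only [Set.mem_setOf_eq] at hb
        have : b ≤ L := by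
          by_contra h'
          exact hb (hA b (lt_of_not_ge h'))
        exact EReal.coe_le_coe_iff.mpr this
      · by_contra h'
        rw [not_le] at h'
        obtain ⟨c, hc1, hc2⟩ := EReal.exists_between_coe_real h'
        have : (c : EReal) ≤ Ilimsup I x :=
          le_sSup ⟨c, hB c (by exact_mod_cast hc2), rfl⟩
        exact absurd (lt_of_le_of_lt this hc1) (lt_irrefl _)
    · apply le_antisymm
      · by_contra h'
        rw [not_le] at h'
        obtain ⟨c, hc1, hc2⟩ := EReal.exists_between_coe_real h'
        have : Iliminf I x ≤ (c : EReal) :=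
          sInf_le ⟨c, hD c (by exact_mod_cast hc1), rfl⟩
        exact absurd (lt_of_le_of_lt this hc2) (lt_irrefl _)
      · apply le_sInf
        rintro y ⟨a, ha, rfl⟩
        simp only [Set.mem_setOf_eq] at ha
        have : L ≤ a := by
          by_contra h'
          exact ha (hC a (lt_of_not_ge h'))
        exact EReal.coe_le_coe_iff.mpr this
  · rintro ⟨hsup, hinf⟩ ε hε
    have h1 : {k | x k > L + ε / 2} ∈ I.carrier := by
      by_contra hmem
      have h3 : ((L + ε / 2 : ℝ) : EReal) ≤ Ilimsup I x :=
        le_sSup ⟨L + ε / 2, hmem, rfl⟩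
      rw [hsup] at h3
      have : L + ε / 2 ≤ L := by exact_mod_cast h3
      linarith
    have h2 : {k | x k < L - ε / 2} ∈ I.carrier := by
      by_contra hmem
      have h3 : Iliminf I x ≤ ((L - ε / 2 : ℝ) : EReal) :=
        sInf_le ⟨L - ε / 2, hmem, rfl⟩
      rw [hinf] at h3
      have : L ≤ L - ε / 2 := by exact_mod_cast h3
      linarith
    refine I.downward _ (I.unionMem _ h1 _ h2) _ ?_
    intro k hk
    simp only [Set.mem_setOf_eq] at hk
    rcases le_abs.mp hk with h' | h'
    · exact Or.inl (by simp only [Set.mem_setOf_eq]; linarith)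
    · exact Or.inr (by simp only [Set.mem_setOf_eq]; linarith)
end

section
/- For every pair of Lebesgue measurable sets A, B ⊆ ℝ, Θ_I(A ∩ B) = Θ_I(A) ∩ Θ_I(B). -/
open MeasureTheory Set
open scoped ENNReal

/-!
If `A` and `B` have lower `I`-density `1` along an admissible sequence of intervals, then so
does `A ∩ B`: the ratios satisfy `r(A) + r(B) ≤ 1 + r(A ∩ B)` (inclusion–exclusion inside
each interval), so if `r(A ∩ B) < a < 1` then `r(A)` or `r(B)` is below `(1 + a) / 2`, and
both of these index sets lie in `I`. The other inclusion is monotonicity of the ratios.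
-/

lemma NAIdeal.empty_mem (I : NAIdeal) : (∅ : Set ℕ) ∈ I.carrier :=
  I.downward {0} (I.admissible 0) ∅ (empty_subset _)

section Iliminf

variable {I : NAIdeal} {x y z : ℕ → ℝ}

lemma Iliminf_le_of_notMem {a : ℝ} (h : {k | x k < a} ∉ I.carrier) : Iliminf I x ≤ a :=
  sInf_le ⟨a, h, rfl⟩

lemma Iliminf_le_one (hx : ∀ k, x k ≤ 1) : Iliminf I x ≤ 1 := by
  refine EReal.le_of_forall_lt_iff_le.mp fun a ha => Iliminf_le_of_notMem ?_
  have ha' : (1 : ℝ) < a := mod_cast ha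
  have huniv : {k | x k < a} = univ := eq_univ_of_forall fun k => (hx k).trans_lt ha'
  exact huniv ▸ I.nontriv

lemma Iliminf_eq_one_iff (hx : ∀ k, x k ≤ 1) :
    Iliminf I x = 1 ↔ ∀ a < (1 : ℝ), {k | x k < a} ∈ I.carrier := by
  refine ⟨fun h a ha => ?_, fun h => (Iliminf_le_one hx).antisymm ?_⟩
  · by_contra hnot
    have : (1 : EReal) ≤ a := h ▸ Iliminf_le_of_notMem hnot
    exact ha.not_ge (mod_cast this)
  · refine le_sInf ?_
    rintro _ ⟨a, ha, rfl⟩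
    show (1 : EReal) ≤ a
    exact mod_cast not_lt.mp fun ha' => ha (h a ha')

lemma Iliminf_eq_one_of_le (hy : ∀ k, y k ≤ 1) (hxy : ∀ k, x k ≤ y k)
    (hx : Iliminf I x = 1) : Iliminf I y = 1 := by
  rw [Iliminf_eq_one_iff fun k => (hxy k).trans (hy k)] at hx
  refine (Iliminf_eq_one_iff hy).mpr fun a ha => I.downward _ (hx a ha) _ ?_
  exact fun k hk => (hxy k).trans_lt hk

lemma Iliminf_eq_one_of_add_le_one_add (hx : ∀ k, x k ≤ 1) (hy : ∀ k, y k ≤ 1)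
    (hz : ∀ k, z k ≤ 1) (hxyz : ∀ k, x k + y k ≤ 1 + z k)
    (hx1 : Iliminf I x = 1) (hy1 : Iliminf I y = 1) : Iliminf I z = 1 := by
  rw [Iliminf_eq_one_iff hx] at hx1
  rw [Iliminf_eq_one_iff hy] at hy1
  refine (Iliminf_eq_one_iff hz).mpr fun a ha => ?_
  have hb : (1 + a) / 2 < 1 := by linarith
  refine I.downward _ (I.unionMem _ (hx1 _ hb) _ (hy1 _ hb)) _ fun k hk => ?_
  by_contra hnot
  simp only [mem_union, mem_ofPred_eq, not_or, not_lt] at hk hnot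
  linarith [hxyz k]

end Iliminf

lemma measure_inter_add_measure_inter_le {α : Type*} [MeasurableSpace α] (μ : Measure α)
    {B : Set α} (hB : MeasurableSet B) (J A : Set α) :
    μ (J ∩ A) + μ (J ∩ B) ≤ μ J + μ (J ∩ (A ∩ B)) := by
  have hAB : (J ∩ A) \ B ⊆ J \ B := sdiff_subset_sdiff_left inter_subset_left
  calc μ (J ∩ A) + μ (J ∩ B)
        = μ (J ∩ (A ∩ B)) + (μ ((J ∩ A) \ B) + μ (J ∩ B)) := by
        rw [← measure_inter_add_sdiff (J ∩ A) hB, inter_assoc, add_assoc]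
    _ ≤ μ (J ∩ (A ∩ B)) + (μ (J \ B) + μ (J ∩ B)) := by gcongr
    _ = μ J + μ (J ∩ (A ∩ B)) := by
        rw [add_comm (μ (J \ B)), measure_inter_add_sdiff J hB, add_comm]

section ratioSeq

variable (J : ℕ → Set ℝ) (n : ℕ)

lemma ratioSeq_le_one (E : Set ℝ) : ratioSeq E J n ≤ 1 := by
  unfold ratioSeq
  rcases eq_or_ne (volume (J n)) ∞ with hv | hv
  · simp [hv]
  · exact div_le_one_of_le₀ (ENNReal.toReal_mono hv (measure_mono inter_subset_left))
      ENNReal.toReal_nonneg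

lemma ratioSeq_mono {E F : Set ℝ} (h : E ⊆ F) : ratioSeq E J n ≤ ratioSeq F J n := by
  unfold ratioSeq
  rcases eq_or_ne (volume (J n)) ∞ with hv | hv
  · simp [hv]
  · gcongr
    exact measure_ne_top_of_subset inter_subset_left hv

lemma ratioSeq_add_ratioSeq_le {A B : Set ℝ} (hB : MeasurableSet B) :
    ratioSeq A J n + ratioSeq B J n ≤ 1 + ratioSeq (A ∩ B) J n := by
  unfold ratioSeq
  rcases (ENNReal.toReal_nonneg (a := volume (J n))).eq_or_lt with h0 | hpos
  · simp [← h0]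
  have hfin := (ENNReal.toReal_pos_iff.mp hpos).2.ne
  have hsub {E : Set ℝ} : volume (J n ∩ E) ≠ ∞ :=
    measure_ne_top_of_subset inter_subset_left hfin
  rw [← add_div, ← div_self hpos.ne', ← add_div]
  refine div_le_div_of_nonneg_right ?_ hpos.le
  rw [← ENNReal.toReal_add hsub hsub, ← ENNReal.toReal_add hfin hsub]
  exact ENNReal.toReal_mono (by finiteness) (measure_inter_add_measure_inter_le volume hB _ _)

end ratioSeq

lemma exists_aboutP_admSeq (I : NAIdeal) (p : ℝ) : ∃ J, AboutP p J ∧ AdmSeq I J := by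
  refine ⟨fun n => Icc p (p + ((n : ℝ) + 1)⁻¹), fun n => ⟨?_, _, _, rfl⟩, ?_⟩
  · exact left_mem_Icc.mpr (le_add_of_nonneg_right (by positivity))
  · unfold AdmSeq
    convert I.empty_mem
    refine compl_empty_iff.mpr (eq_univ_of_forall fun n => ?_)
    have hvol : volume (Icc p (p + ((n : ℝ) + 1)⁻¹)) = ((n : ℝ≥0∞) + 1)⁻¹ := by
      rw [Real.volume_Icc, add_sub_cancel_left, ENNReal.ofReal_inv_of_pos (by positivity)]
      norm_cast
    simp only [mem_ofPred_eq, hvol, one_div]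
    exact ⟨by simp, ENNReal.inv_lt_inv.mpr (ENNReal.lt_add_right (by simp) one_ne_zero)⟩

lemma lowerIDensity_le_one (I : NAIdeal) (p : ℝ) (E : Set ℝ) : lowerIDensity I p E ≤ 1 := by
  obtain ⟨J, hJp, hJI⟩ := exists_aboutP_admSeq I p
  calc lowerIDensity I p E ≤ Iliminf I (ratioSeq E J) := sInf_le ⟨J, hJp, hJI, rfl⟩
    _ ≤ 1 := Iliminf_le_one (ratioSeq_le_one J · E)

lemma mem_Theta_iff (I : NAIdeal) (p : ℝ) (E : Set ℝ) :
    p ∈ Theta I E ↔ ∀ J, AboutP p J → AdmSeq I J → Iliminf I (ratioSeq E J) = 1 := by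
  have hle := lowerIDensity_le_one I p E
  change lowerIDensity I p E = 1 ↔ _
  rw [← hle.ge_iff_eq, lowerIDensity, le_sInf_iff]
  refine ⟨fun h J hJp hJI => (Iliminf_le_one (ratioSeq_le_one J · E)).antisymm
    (h _ ⟨J, hJp, hJI, rfl⟩), ?_⟩
  rintro h _ ⟨J, hJp, hJI, rfl⟩
  exact (h J hJp hJI).ge

theorem stmt11_general (I : NAIdeal) (A B : Set ℝ) (hB : MeasurableSet B) :
    Theta I (A ∩ B) = Theta I A ∩ Theta I B := by
  ext p
  simp only [mem_inter_iff, mem_Theta_iff]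
  refine ⟨fun h => ⟨fun J hJp hJI => ?_, fun J hJp hJI => ?_⟩,
    fun ⟨hpA, hpB⟩ J hJp hJI => ?_⟩
  · exact Iliminf_eq_one_of_le (ratioSeq_le_one J · A)
      (ratioSeq_mono J · inter_subset_left) (h J hJp hJI)
  · exact Iliminf_eq_one_of_le (ratioSeq_le_one J · B)
      (ratioSeq_mono J · inter_subset_right) (h J hJp hJI)
  · exact Iliminf_eq_one_of_add_le_one_add (ratioSeq_le_one J · A) (ratioSeq_le_one J · B)
      (ratioSeq_le_one J · _) (ratioSeq_add_ratioSeq_le J · hB) (hpA J hJp hJI) (hpB J hJp hJI)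

/-- Θ_I(A ∩ B) = Θ_I(A) ∩ Θ_I(B). -/
theorem stmt11 (I : NAIdeal) (A B : Set ℝ) (hA : MeasurableSet A) (hB : MeasurableSet B) :
    Theta I (A ∩ B) = Theta I A ∩ Theta I B :=
  stmt11_general I A B hB
end
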